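/- arXiv:1908.02920 — 2 statements merged into one kernel-verified Lean document; each statement's English description precedes it below -/
import Mathlib

section
/- Let $\pi$ be a symmetric probability distribution on $\mathbb{Z}$ with variance $\sigma^2$. For $\alpha > 0$ let $h_\alpha(s) = C_\alpha e^{-\alpha s^2/4}$ with $C_\alpha = (\sum_s e^{-\alpha s^2/2})^{-1/2}$. Then $\sum_{s,s'} \pi(s-s')\, h_\alpha(s)\, h_\alpha(s') \geq 1 - \frac{\alpha \sigma^2}{4}$. -/
/-!
Shear the double sum to `∑ τ, π τ * A τ` with `A τ = ∑ b, h (τ + b) h b` the autocorrelation of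
`h = h_α`. Completing the product `h (τ + b) h b` gives `h b ² exp (-α τ² / 4) exp (-α τ b / 2)`,
and averaging over `b` and `-b` replaces the last factor by a `cosh ≥ 1`; since `∑ h b ² = 1`,
`A τ ≥ exp (-α τ² / 4) ≥ 1 - α τ² / 4`. Summing against `π` gives `1 - α σ² / 4`.
-/

lemma summable_exp_neg_mul_sq {c : ℝ} (hc : 0 < c) :
    Summable fun n : ℤ => Real.exp (-c * n ^ 2) := by
  refine (summable_pow_mul_jacobiTheta₂_term_bound 0 (div_pos hc Real.pi_pos) 0).congr
    fun n => ?_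
  simp only [pow_zero, one_mul, mul_zero, zero_mul, sub_zero]
  congr 1
  field_simp

lemma tsum_le_tsum_of_le_half_add_neg {G : Type*} [InvolutiveNeg G] {f g : G → ℝ}
    (hfg : ∀ b, g b ≤ (f b + f (-b)) / 2) (hg : Summable g) (hf : Summable f) :
    ∑' b, g b ≤ ∑' b, f b := by
  have hf_neg : Summable fun b => f (-b) := (Equiv.neg G).summable_iff.mpr hf
  calc ∑' b, g b ≤ ∑' b, (f b + f (-b)) / 2 :=
        hg.tsum_le_tsum hfg ((hf.add hf_neg).div_const 2)
    _ = (∑' b, f b + ∑' b, f (-b)) / 2 := by rw [tsum_div_const, hf.tsum_add hf_neg]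
    _ = ∑' b, f b := by rw [tsum_comp_neg]; ring

lemma exp_le_exp_sub_add_exp_add_div_two (a x : ℝ) :
    Real.exp a ≤ (Real.exp (a - x) + Real.exp (a + x)) / 2 := by
  rw [sub_eq_add_neg, Real.exp_add, Real.exp_add, ← mul_add, mul_div_assoc,
    add_comm (Real.exp (-x)), ← Real.cosh_eq]
  exact le_mul_of_one_le_right (Real.exp_pos a).le (Real.one_le_cosh x)

lemma exp_mul_tsum_le_tsum_gaussian_mul {α : ℝ} (hα : 0 < α) (τ : ℤ) :
    Real.exp (-α * τ ^ 2 / 4) * ∑' b : ℤ, Real.exp (-α * b ^ 2 / 2)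
      ≤ ∑' b : ℤ, Real.exp (-α * ((τ + b : ℤ) : ℝ) ^ 2 / 4) * Real.exp (-α * b ^ 2 / 4) := by
  rw [← tsum_mul_left]
  refine tsum_le_tsum_of_le_half_add_neg (fun b => ?_) ?_ ?_
  · simp only [← Real.exp_add, Int.cast_add, Int.cast_neg]
    convert exp_le_exp_sub_add_exp_add_div_two (-α * τ ^ 2 / 4 + -α * b ^ 2 / 2) (α * τ * b / 2)
      using 4 <;> ring
  · exact (summable_exp_neg_mul_sq (half_pos hα)).mul_left (Real.exp (-α * τ ^ 2 / 4))
      |>.congr fun b => by ring_nf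
  · refine Summable.of_nonneg_of_le (f := fun b : ℤ => Real.exp (-α * b ^ 2 / 4))
      (fun b => by positivity) (fun b => ?_)
      ((summable_exp_neg_mul_sq (by positivity : 0 < α / 4)).congr fun b => by ring_nf)
    refine mul_le_of_le_one_left (Real.exp_pos _).le (Real.exp_le_one_iff.mpr ?_)
    have : 0 ≤ α * ((τ + b : ℤ) : ℝ) ^ 2 := by positivity
    linarith

section Shear

variable {G : Type*} [AddCommGroup G]

def addShear : G × G ≃ G × G where
  toFun q := (q.1 + q.2, q.2)
  invFun p := (p.1 - p.2, p.2)
  left_inv _ := by simp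
  right_inv _ := by simp

variable {π h : G → ℝ}

lemma summable_mul_add_mul (hπ : ∀ τ, 0 ≤ π τ) (hh : ∀ s, 0 ≤ h s)
    (hπs : Summable π) (hhs : Summable h) :
    Summable fun q : G × G => π q.1 * (h (q.1 + q.2) * h q.2) := by
  refine Summable.of_nonneg_of_le (fun q => mul_nonneg (hπ _) (mul_nonneg (hh _) (hh _)))
    (fun q => ?_) (hπs.mul_of_nonneg (hhs.mul_left (∑' s, h s)) hπ
      fun s => mul_nonneg (tsum_nonneg hh) (hh s))
  exact mul_le_mul_of_nonneg_left
    (mul_le_mul_of_nonneg_right (hhs.le_tsum _ fun s _ => hh s) (hh _)) (hπ _)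

lemma tsum_sub_mul_mul_eq_tsum_mul_tsum_add_mul (hπ : ∀ τ, 0 ≤ π τ) (hh : ∀ s, 0 ≤ h s)
    (hπs : Summable π) (hhs : Summable h) :
    ∑' p : G × G, π (p.1 - p.2) * h p.1 * h p.2 =
      ∑' τ, π τ * ∑' b, h (τ + b) * h b := by
  have hsum := summable_mul_add_mul hπ hh hπs hhs
  calc ∑' p : G × G, π (p.1 - p.2) * h p.1 * h p.2
      = ∑' q : G × G, π q.1 * (h (q.1 + q.2) * h q.2) := by
        rw [← addShear.tsum_eq]
        simp only [addShear, Equiv.coe_fn_mk, add_sub_cancel_right, mul_assoc]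
    _ = ∑' τ, π τ * ∑' b, h (τ + b) * h b := by
        rw [hsum.tsum_prod' hsum.prod_factor]
        simp only [tsum_mul_left]

lemma summable_mul_tsum_add_mul (hπ : ∀ τ, 0 ≤ π τ) (hh : ∀ s, 0 ≤ h s)
    (hπs : Summable π) (hhs : Summable h) :
    Summable fun τ => π τ * ∑' b, h (τ + b) * h b := by
  simpa only [tsum_mul_left] using (summable_mul_add_mul hπ hh hπs hhs).prod

end Shear

lemma tsum_exp_neg_mul_sq_div_two_pos {α : ℝ} (hα : 0 < α) :
    0 < ∑' s : ℤ, Real.exp (-α * s ^ 2 / 2) :=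
  ((summable_exp_neg_mul_sq (half_pos hα)).congr fun s => by ring_nf).tsum_pos
    (fun _ => (Real.exp_pos _).le) 0 (Real.exp_pos _)

lemma rpow_neg_one_div_two_sq_mul_self {S : ℝ} (hS : 0 < S) :
    (S ^ (-(1 : ℝ) / 2)) ^ 2 * S = 1 := by
  rw [← Real.rpow_natCast, ← Real.rpow_mul hS.le, ← Real.rpow_add_one hS.ne']
  norm_num

lemma one_sub_mul_sq_div_four_le_tsum_gaussian_mul {α C : ℝ} (hα : 0 < α)
    (hC : C ^ 2 * ∑' s : ℤ, Real.exp (-α * s ^ 2 / 2) = 1) (τ : ℤ) :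
    1 - α * τ ^ 2 / 4 ≤
      ∑' b : ℤ, C * Real.exp (-α * ((τ + b : ℤ) : ℝ) ^ 2 / 4) * (C * Real.exp (-α * b ^ 2 / 4)) :=
  calc 1 - α * τ ^ 2 / 4 ≤ Real.exp (-α * τ ^ 2 / 4) := by
        linarith [Real.add_one_le_exp (-α * τ ^ 2 / 4)]
    _ = C ^ 2 * (Real.exp (-α * τ ^ 2 / 4) * ∑' s : ℤ, Real.exp (-α * s ^ 2 / 2)) := by
        rw [mul_left_comm, hC, mul_one]
    _ ≤ C ^ 2 * ∑' b : ℤ,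
          Real.exp (-α * ((τ + b : ℤ) : ℝ) ^ 2 / 4) * Real.exp (-α * b ^ 2 / 4) := by
        gcongr; exact exp_mul_tsum_le_tsum_gaussian_mul hα τ
    _ = _ := by rw [← tsum_mul_left]; ring_nf

theorem interface_SOS_gaussian_test_lower_bound_general
    (π : ℤ → ℝ) (hπnn : ∀ η, 0 ≤ π η)
    (hπsummable : Summable π) (hπ1 : ∑' η, π η = 1)
    (σ2 : ℝ) (hmom : Summable fun η : ℤ => (η : ℝ)^2 * π η)
    (hσ2 : σ2 = ∑' η : ℤ, (η : ℝ)^2 * π η)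
    (α : ℝ) (hα : 0 < α)
    (C : ℝ) (hC : C = (∑' s : ℤ, Real.exp (-α * (s : ℝ)^2 / 2)) ^ (-(1 : ℝ) / 2))
    (hα' : ℤ → ℝ) (hdef : ∀ s : ℤ, hα' s = C * Real.exp (-α * (s : ℝ)^2 / 4)) :
    1 - α * σ2 / 4 ≤ ∑' p : ℤ × ℤ, π (p.1 - p.2) * hα' p.1 * hα' p.2 := by
  set S := ∑' s : ℤ, Real.exp (-α * (s : ℝ) ^ 2 / 2)
  have hS : 0 < S := tsum_exp_neg_mul_sq_div_two_pos hα
  have hCS : C ^ 2 * S = 1 := hC ▸ rpow_neg_one_div_two_sq_mul_self hS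
  have hC0 : 0 ≤ C := hC ▸ (Real.rpow_pos_of_pos hS _).le
  have hh : ∀ s, 0 ≤ hα' s := fun s => hdef s ▸ by positivity
  have hhs : Summable hα' := by
    refine ((summable_exp_neg_mul_sq (by positivity : 0 < α / 4)).mul_left C).congr fun s => ?_
    rw [hdef]; ring_nf
  have hautocorr (τ : ℤ) : 1 - α * τ ^ 2 / 4 ≤ ∑' b, hα' (τ + b) * hα' b := by
    simpa only [hdef] using one_sub_mul_sq_div_four_le_tsum_gaussian_mul hα hCS τ
  rw [tsum_sub_mul_mul_eq_tsum_mul_tsum_add_mul hπnn hh hπsummable hhs]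
  calc 1 - α * σ2 / 4 = ∑' τ, (π τ - α / 4 * ((τ : ℝ) ^ 2 * π τ)) := by
        rw [hπsummable.tsum_sub (hmom.mul_left _), tsum_mul_left, hπ1, hσ2]; ring
    _ ≤ ∑' τ, π τ * ∑' b, hα' (τ + b) * hα' b := by
        refine Summable.tsum_le_tsum (fun τ => ?_) (hπsummable.sub (hmom.mul_left _))
          (summable_mul_tsum_add_mul hπnn hh hπsummable hhs)
        linarith [mul_le_mul_of_nonneg_left (hautocorr τ) (hπnn τ)]

/-- Testing against the discrete Gaussian `h_α(s) = C_α e^{-αs²/4}`: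
`Σ_{s,s'} π(s-s') h_α(s) h_α(s') ≥ 1 - ασ²/4`. -/
theorem interface_SOS_gaussian_test_lower_bound
    (π : ℤ → ℝ) (hπnn : ∀ η, 0 ≤ π η) (hπsym : ∀ η, π (-η) = π η)
    (hπsummable : Summable π) (hπ1 : ∑' η, π η = 1)
    (σ2 : ℝ) (hmom : Summable fun η : ℤ => (η : ℝ)^2 * π η)
    (hσ2 : σ2 = ∑' η : ℤ, (η : ℝ)^2 * π η)
    (α : ℝ) (hα : 0 < α)
    (C : ℝ) (hC : C = (∑' s : ℤ, Real.exp (-α * (s : ℝ)^2 / 2)) ^ (-(1 : ℝ) / 2))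
    (hα' : ℤ → ℝ) (hdef : ∀ s : ℤ, hα' s = C * Real.exp (-α * (s : ℝ)^2 / 4)) :
    1 - α * σ2 / 4 ≤ ∑' p : ℤ × ℤ, π (p.1 - p.2) * hα' p.1 * hα' p.2 :=
  interface_SOS_gaussian_test_lower_bound_general π hπnn hπsummable hπ1 σ2 hmom hσ2 α hα C hC hα'
    hdef
end

section
/- Let $(\eta_k)$ be i.i.d. integer random variables with symmetric law $\pi$, finite exponential moments for $|a| \leq a_0$ and log-moment generating function $\Lambda(a) = \log\mathbb{E}[e^{a\eta_1}] = \frac{\sigma^2 a^2}{2} + O(a^4)$ as $a \to 0$. Fix $s > 0$, $\alpha \in (0,1)$, $N \geq 1$, let $s_x = s + \sum_{k=1}^x \eta_k$, $n = \lfloor\sqrt{N}\rfloor$, and $z = \inf\{x : s_x \leq (1-\alpha)s\}$. Then there exists a constant $b > 0$ (depending on $\alpha, \sigma$ but not on $s$ or $N$, valid for $s^2 \leq c_0 N$ with suitable $c_0$) such that $\mathbb{E}_s\left[ e^{-\frac{1}{N}\sum_{x=0}^n s_x^2} \right] \leq e^{-\frac{\sqrt{2}\alpha(1-\alpha)s^2}{2\sigma\sqrt{N}}}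 + e^{-\frac{(1-\alpha)^2 s^2 (n+1)}{N}} \leq 2 e^{-\frac{2 b s^2}{\sqrt{N}}}$. -/
/-!
Let `z` be the first time the walk `s_x = s + S_x` drops to `L = (1 - α) s`. Before `z` every
`s_x ^ 2` is at least `L ^ 2`, so the integrand is at most `exp (-L ^ 2 z / N)` on `{z ≤ n}` and
`exp (-L ^ 2 (n + 1) / N)` on `{z > n}`. For the first piece, optional stopping of the
exponential martingale `exp (a S_x) / M(a) ^ x` at the negative tilt
`a = -√2 (1 - α) s / (σ √N)` shows that reaching `L` costs a factor `exp (a α s)`. The tilt is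
chosen so that the factor `M(a) ^ z ≈ exp (σ² a² z / 2)` produced by the martingale is exactly
offset by the weight `exp (-L ^ 2 z / N)`; the `O(a⁴)` error in `log M(a)` is absorbed once
`s ^ 2 ≤ c₀ N`.
-/

open MeasureTheory ProbabilityTheory Real Finset

def IsFirstPassageBelow (u : ℕ → ℝ) (L : ℝ) (x : ℕ) : Prop :=
  u x ≤ L ∧ ∀ y < x, L < u y

namespace IsFirstPassageBelow

variable {u : ℕ → ℝ} {L : ℝ}

lemma eq {x y : ℕ} (hx : IsFirstPassageBelow u L x) (hy : IsFirstPassageBelow u L y) :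
    x = y := by
  by_contra hne
  rcases Nat.lt_or_gt_of_ne hne with h | h
  · exact (hy.2 x h).not_ge hx.1
  · exact (hx.2 y h).not_ge hy.1

lemma exists_le {x : ℕ} (hx : u x ≤ L) : ∃ y ≤ x, IsFirstPassageBelow u L y := by
  classical
  have h : ∃ y, u y ≤ L := ⟨x, hx⟩
  exact ⟨Nat.find h, Nat.find_min' h hx, Nat.find_spec h,
    fun y hy => not_le.1 (Nat.find_min h hy)⟩

end IsFirstPassageBelow

lemma mul_sq_le_sum_range_sq {u : ℕ → ℝ} {L : ℝ} {m : ℕ} (hL : 0 ≤ L)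
    (hu : ∀ y < m, L < u y) :
    m * L ^ 2 ≤ ∑ y ∈ range m, u y ^ 2 := by
  calc (m : ℝ) * L ^ 2 = ∑ y ∈ range m, L ^ 2 := by simp
    _ ≤ ∑ y ∈ range m, u y ^ 2 :=
      sum_le_sum fun y hy => pow_le_pow_left₀ hL (hu y (mem_range.1 hy)).le 2

lemma exp_neg_mul_sum_range_sq_le {u : ℕ → ℝ} {L t : ℝ} (hL : 0 ≤ L) (ht : 0 ≤ t)
    (n : ℕ) :
    exp (-t * ∑ x ∈ range (n + 1), u x ^ 2) ≤
      ∑ x ∈ range (n + 1), {x | IsFirstPassageBelow u L x}.indicator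
          (fun x : ℕ => exp (-(t * L ^ 2 * x))) x
        + exp (-(t * L ^ 2 * (n + 1))) := by
  set w := {x | IsFirstPassageBelow u L x}.indicator fun x : ℕ => exp (-(t * L ^ 2 * x))
  have hw x : 0 ≤ w x := Set.indicator_nonneg (fun _ _ => (exp_pos _).le) x
  by_cases hhit : ∃ x ≤ n, u x ≤ L
  · obtain ⟨x, hxn, hx⟩ := hhit
    obtain ⟨y, hyx, hy⟩ := IsFirstPassageBelow.exists_le hx
    have hlow : y * L ^ 2 ≤ ∑ x ∈ range (n + 1), u x ^ 2 :=
      (mul_sq_le_sum_range_sq hL hy.2).trans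
        (sum_le_sum_of_subset_of_nonneg (range_subset_range.2 (by omega)) fun _ _ _ => sq_nonneg _)
    calc exp (-t * ∑ x ∈ range (n + 1), u x ^ 2) ≤ exp (-(t * L ^ 2 * y)) := by
          gcongr; nlinarith
      _ = w y := by simp [w, hy]
      _ ≤ ∑ x ∈ range (n + 1), w x := single_le_sum (fun x _ => hw x) (by simp; omega)
      _ ≤ _ := le_add_of_nonneg_right (exp_pos _).le
  · simp only [not_exists, not_and, not_le] at hhit
    have hlow := mul_sq_le_sum_range_sq (m := n + 1) hL fun y hy => hhit y (by omega)
    push_cast at hlow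
    calc exp (-t * ∑ x ∈ range (n + 1), u x ^ 2) ≤ exp (-(t * L ^ 2 * (n + 1))) := by
          gcongr; nlinarith
      _ ≤ _ := le_add_of_nonneg_left (sum_nonneg fun x _ => hw x)

lemma measureReal_le_exp_neg_mul_setIntegral_exp {Ω : Type*} [MeasurableSpace Ω]
    {μ : Measure Ω} [IsFiniteMeasure μ] {f : Ω → ℝ} {c : ℝ} {A : Set Ω}
    (hA : MeasurableSet A) (hf : Integrable (fun ω => exp (f ω)) μ) (hc : ∀ ω ∈ A, c ≤ f ω) :
    μ.real A ≤ exp (-c) * ∫ ω in A, exp (f ω) ∂μ := by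
  rw [← integral_const_mul]
  calc μ.real A = ∫ _ in A, (1 : ℝ) ∂μ := by simp
    _ ≤ ∫ ω in A, exp (-c) * exp (f ω) ∂μ :=
      setIntegral_mono_on (integrableOn_const) (hf.const_mul _).integrableOn hA fun ω hω => by
        rw [← exp_add]; exact one_le_exp (by linarith [hc ω hω])

section ExponentialMartingale

variable {Ω : Type*} [MeasurableSpace Ω] {μ : Measure Ω} {X : ℕ → Ω → ℝ}

abbrev sigmaOf (X : ℕ → Ω → ℝ) (S : Set ℕ) : MeasurableSpace Ω :=
  ⨆ k ∈ S, MeasurableSpace.comap (X k) inferInstance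

omit [MeasurableSpace Ω] in
lemma measurable_sum_sigmaOf {S : Set ℕ} {s : Finset ℕ} (hs : ↑s ⊆ S) :
    Measurable[sigmaOf X S] (fun ω => ∑ k ∈ s, X k ω) :=
  Finset.measurable_sum _ fun k hk => measurable_iff_comap_le.2 <|
    le_iSup₂ (f := fun k (_ : k ∈ S) => MeasurableSpace.comap (X k) inferInstance) k (hs hk)

lemma sigmaOf_le (hX : ∀ k, Measurable (X k)) (S : Set ℕ) :
    sigmaOf X S ≤ ‹MeasurableSpace Ω› :=
  iSup₂_le fun k _ => (hX k).comap_le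

variable (hX : ∀ k, Measurable (X k)) (hindep : iIndepFun X μ)
  (hident : ∀ k, IdentDistrib (X k) (X 0) μ μ)
include hX hindep hident

lemma integral_exp_mul_sum_eq_pow (a : ℝ) (s : Finset ℕ) :
    ∫ ω, exp (a * ∑ k ∈ s, X k ω) ∂μ = mgf (X 0) μ a ^ s.card := by
  have h := hindep.mgf_sum hX s (t := a)
  rw [prod_congr rfl fun k _ => mgf_congr_of_identDistrib _ _ (hident k) a, prod_const] at h
  simpa only [mgf, Finset.sum_apply] using h

lemma integrable_exp_mul_sum {a : ℝ} (hint : Integrable (fun ω => exp (a * X 0 ω)) μ)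
    (s : Finset ℕ) : Integrable (fun ω => exp (a * ∑ k ∈ s, X k ω)) μ := by
  have := hindep.isProbabilityMeasure
  simpa only [Finset.sum_apply] using hindep.integrable_exp_mul_sum hX fun k _ =>
    ((hident k).comp (measurable_const_mul a).exp).integrable_iff.2 hint

/-- The factorisation behind optional stopping for the martingale `exp (a S_x) / M ^ x`:
the steps after time `x` are independent of events determined by the first `x` steps. -/
lemma setIntegral_exp_mul_sum_range_eq (a : ℝ) {x n : ℕ} (hxn : x ≤ n) {A : Set Ω}
    (hA : MeasurableSet[sigmaOf X (Set.Iio x)] A) :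
    ∫ ω in A, exp (a * ∑ k ∈ range n, X k ω) ∂μ
      = (∫ ω in A, exp (a * ∑ k ∈ range x, X k ω) ∂μ) * mgf (X 0) μ a ^ (n - x) := by
  set past := A.indicator fun ω => exp (a * ∑ k ∈ range x, X k ω)
  set future := fun ω => exp (a * ∑ k ∈ Ico x n, X k ω)
  have hpast : Measurable[sigmaOf X (Set.Iio x)] past :=
    ((measurable_sum_sigmaOf (by simp)).const_mul a).exp.indicator hA
  have hfuture : Measurable[sigmaOf X (Set.Ico x n)] future :=
    ((measurable_sum_sigmaOf (by simp)).const_mul a).exp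
  have hpast_future : IndepFun past future μ := by
    rw [IndepFun_iff_Indep]
    refine indep_of_indep_of_le_right (indep_of_indep_of_le_left ?_ hpast.comap_le)
      hfuture.comap_le
    refine indep_iSup_of_disjoint (fun k => (hX k).comap_le) hindep.iIndep ?_
    exact Set.disjoint_left.2 fun k hk hk' => (Set.mem_Iio.1 hk).not_ge (Set.mem_Ico.1 hk').1
  have hprod : A.indicator (fun ω => exp (a * ∑ k ∈ range n, X k ω))
      = fun ω => past ω * future ω := by
    ext ω
    by_cases hω : ω ∈ A <;>
      simp [past, future, hω, ← sum_range_add_sum_Ico _ hxn, mul_add, exp_add]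
  have hA' := sigmaOf_le hX _ _ hA
  rw [← integral_indicator hA', hprod, hpast_future.integral_fun_mul_eq_mul_integral
    (hpast.mono (sigmaOf_le hX _) le_rfl).aestronglyMeasurable
    (hfuture.mono (sigmaOf_le hX _) le_rfl).aestronglyMeasurable,
    integral_indicator hA', integral_exp_mul_sum_eq_pow hX hindep hident, Nat.card_Ico]

/-- Optional stopping for the martingale `exp (a S_x) / M ^ x` stopped at the time `x` of the
event `A x`, combined with the Chernoff bound `1 ≤ exp (-c) exp (a S_x)` on `A x`. -/
lemma sum_mul_measureReal_le {a c E : ℝ} (hint : Integrable (fun ω => exp (a * X 0 ω)) μ)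
    {n : ℕ} {A : ℕ → Set Ω} {w : ℕ → ℝ}
    (hA : ∀ x, MeasurableSet[sigmaOf X (Set.Iio x)] (A x))
    (hdisj : Set.PairwiseDisjoint ↑(range (n + 1)) A)
    (hc : ∀ x, ∀ ω ∈ A x, c ≤ a * ∑ k ∈ range x, X k ω)
    (hw : ∀ x ≤ n, 0 ≤ w x ∧ w x * mgf (X 0) μ a ^ x ≤ E) :
    ∑ x ∈ range (n + 1), w x * μ.real (A x) ≤ exp (-c) * E := by
  have := hindep.isProbabilityMeasure
  set M := mgf (X 0) μ a
  have hM : 0 < M := mgf_pos hint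
  have hA' x : MeasurableSet (A x) := sigmaOf_le hX _ _ (hA x)
  have hintS := integrable_exp_mul_sum hX hindep hident hint
  set J := fun x => ∫ ω in A x, exp (a * ∑ k ∈ range n, X k ω) ∂μ
  have hJ x : 0 ≤ J x := setIntegral_nonneg (hA' x) fun _ _ => (exp_pos _).le
  have hsumJ : ∑ x ∈ range (n + 1), J x ≤ M ^ n := by
    have hSn : ∫ ω, exp (a * ∑ k ∈ range n, X k ω) ∂μ = M ^ n := by
      rw [integral_exp_mul_sum_eq_pow hX hindep hident, card_range]
    rw [← hSn, ← integral_biUnion_finset _ (fun x _ => hA' x) hdisj fun x _ =>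
      (hintS _).integrableOn]
    exact setIntegral_le_integral (hintS _) (ae_of_all _ fun _ => (exp_pos _).le)
  have hstep : ∀ x ∈ range (n + 1), w x * μ.real (A x) ≤ exp (-c) * E / M ^ n * J x := by
    intro x hx
    have hxn : x ≤ n := Nat.lt_succ_iff.1 (mem_range.1 hx)
    obtain ⟨hw0, hwE⟩ := hw x hxn
    have hJx : J x = (∫ ω in A x, exp (a * ∑ k ∈ range x, X k ω) ∂μ) * M ^ (n - x) :=
      setIntegral_exp_mul_sum_range_eq hX hindep hident a hxn (hA x)
    have hMn : M ^ n = M ^ x * M ^ (n - x) := by rw [← pow_add, Nat.add_sub_cancel' hxn]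
    calc w x * μ.real (A x) ≤ w x * (exp (-c) * (J x / M ^ (n - x))) := by
          rw [hJx, mul_div_cancel_right₀ _ (pow_pos hM _).ne']
          exact mul_le_mul_of_nonneg_left
            (measureReal_le_exp_neg_mul_setIntegral_exp (hA' x) (hintS _) (hc x)) hw0
      _ = exp (-c) * (w x * M ^ x) / M ^ n * J x := by
          rw [hMn]; field_simp
      _ ≤ exp (-c) * E / M ^ n * J x := by gcongr
  have hE : 0 ≤ E :=
    (mul_nonneg (hw 0 n.zero_le).1 (pow_nonneg hM.le 0)).trans (hw 0 n.zero_le).2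
  calc ∑ x ∈ range (n + 1), w x * μ.real (A x)
      ≤ exp (-c) * E / M ^ n * ∑ x ∈ range (n + 1), J x := by
        rw [mul_sum]; exact sum_le_sum hstep
    _ ≤ exp (-c) * E / M ^ n * M ^ n := by gcongr
    _ = exp (-c) * E := div_mul_cancel₀ _ (pow_pos hM _).ne'

end ExponentialMartingale

section Tilt

variable {α σ s N : ℝ}

/-- The tilt `a` of the exponential martingale, chosen so that `σ² a² / 2 = (1 - α)² s² / N`,
the weight per step of the integrand before the first passage below `(1 - α) s`. -/
noncomputable def tilt (α σ s N : ℝ) : ℝ := -(√2 * (1 - α) * s / (σ * √N))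

lemma sq_tilt (hσ : 0 < σ) (hN : 0 < N) :
    σ ^ 2 * tilt α σ s N ^ 2 / 2 = 1 / N * ((1 - α) * s) ^ 2 := by
  rw [tilt, neg_sq, div_pow, mul_pow, mul_pow, mul_pow, sq_sqrt (by norm_num), sq_sqrt hN.le]
  field_simp

lemma abs_tilt_le (hα : α ∈ Set.Ioo 0 1) (hσ : 0 < σ) {a₀ : ℝ} (ha₀ : 0 < a₀)
    (hN : 0 < N) (hs : s ^ 2 ≤ σ ^ 2 * a₀ ^ 2 / 2 * N) : |tilt α σ s N| ≤ a₀ := by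
  refine abs_le_of_sq_le_sq ?_ ha₀.le
  have h1α : (1 - α) ^ 2 ≤ 1 := by nlinarith [hα.1, hα.2]
  rw [tilt, neg_sq, div_pow, mul_pow, mul_pow, mul_pow, sq_sqrt (by norm_num), sq_sqrt hN.le,
    div_le_iff₀ (by positivity)]
  nlinarith [mul_le_mul_of_nonneg_right h1α (sq_nonneg s)]

/-- The drift `a α s` pays for twice the target exponent; the quartic error term of `log M`
over `n ≤ √N` steps is at most one such exponent once `s ^ 2 ≤ c N`. -/
lemma tilt_mul_add_le (hα : α ∈ Set.Ioo 0 1) (hσ : 0 < σ) (hN : 0 < N) {K c n : ℝ}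
    (hK : 0 ≤ K) (hc : c * (8 * K * (1 - α) ^ 3) ≤ √2 * α * σ ^ 3) (hsc : s ^ 2 ≤ c * N)
    (hn : n ≤ √N) :
    tilt α σ s N * (s - (1 - α) * s) + n * (K * tilt α σ s N ^ 4)
      ≤ -(√2 * α * (1 - α) * s ^ 2) / (2 * σ * √N) := by
  have h1α : 0 ≤ 1 - α := by linarith [hα.2]
  have hr : 0 < √N := sqrt_pos.2 hN
  rw [← sq_sqrt hN.le] at hsc
  have h4 : tilt α σ s N ^ 4 = 4 * (1 - α) ^ 4 * s ^ 4 / (σ ^ 4 * √N ^ 4) := by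
    rw [tilt, neg_pow, div_pow, mul_pow, mul_pow, show √2 ^ 4 = (√2 ^ 2) ^ 2 by ring,
      sq_sqrt (by norm_num)]
    ring
  have hdrift : tilt α σ s N * (s - (1 - α) * s)
      = -2 * (√2 * α * (1 - α) * s ^ 2 / (2 * σ * √N)) := by
    rw [tilt]; field_simp; ring
  have hs4 : s ^ 4 ≤ s ^ 2 * (c * √N ^ 2) := by
    nlinarith [mul_le_mul_of_nonneg_left hsc (sq_nonneg s)]
  have hquartic : n * (K * (4 * (1 - α) ^ 4 * s ^ 4 / (σ ^ 4 * √N ^ 4)))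
      ≤ √2 * α * (1 - α) * s ^ 2 / (2 * σ * √N) :=
    calc n * (K * (4 * (1 - α) ^ 4 * s ^ 4 / (σ ^ 4 * √N ^ 4)))
        ≤ √N * (K * (4 * (1 - α) ^ 4 * (s ^ 2 * (c * √N ^ 2)) / (σ ^ 4 * √N ^ 4))) := by
          gcongr
      _ = c * (8 * K * (1 - α) ^ 3) * ((1 - α) * s ^ 2 / (2 * σ ^ 4 * √N)) := by
        field_simp; ring
      _ ≤ √2 * α * σ ^ 3 * ((1 - α) * s ^ 2 / (2 * σ ^ 4 * √N)) := by gcongr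
      _ = √2 * α * (1 - α) * s ^ 2 / (2 * σ * √N) := by field_simp
  rw [h4, hdrift, neg_div]
  linarith

lemma exp_add_exp_le_two_mul_exp (hσ : 0 < σ) {b n : ℝ}
    (hb₁ : b ≤ √2 * α * (1 - α) / (4 * σ)) (hb₂ : b ≤ (1 - α) ^ 2 / 2) (hN : 0 < N)
    (hn : √N ≤ n + 1) :
    exp (-(√2 * α * (1 - α) * s ^ 2) / (2 * σ * √N))
        + exp (-((1 - α) ^ 2 * s ^ 2 * (n + 1)) / N) ≤ 2 * exp (-2 * b * s ^ 2 / √N) := by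
  have hr : 0 < √N := sqrt_pos.2 hN
  have h₁ : -(√2 * α * (1 - α) * s ^ 2) / (2 * σ * √N) ≤ -2 * b * s ^ 2 / √N := by
    rw [div_le_div_iff₀ (by positivity) hr]
    nlinarith [mul_le_mul_of_nonneg_right ((le_div_iff₀ (by positivity)).1 hb₁)
      (by positivity : 0 ≤ s ^ 2 * √N)]
  have h₂ : -((1 - α) ^ 2 * s ^ 2 * (n + 1)) / N ≤ -2 * b * s ^ 2 / √N := by
    have hbr : 2 * b * √N ≤ (1 - α) ^ 2 * (n + 1) := by nlinarith
    have key : 2 * b * s ^ 2 * N ≤ (1 - α) ^ 2 * s ^ 2 * (n + 1) * √N :=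
      calc 2 * b * s ^ 2 * N = 2 * b * √N * (s ^ 2 * √N) := by
            conv_lhs => rw [← mul_self_sqrt hN.le]
            ring
        _ ≤ (1 - α) ^ 2 * (n + 1) * (s ^ 2 * √N) := by gcongr
        _ = (1 - α) ^ 2 * s ^ 2 * (n + 1) * √N := by ring
    rw [div_le_div_iff₀ hN hr]
    linarith
  linarith [exp_le_exp.2 h₁, exp_le_exp.2 h₂]

end Tilt

section Walk

variable {Ω : Type*} [MeasurableSpace Ω] {μ : Measure Ω} {X : ℕ → Ω → ℝ}

omit [MeasurableSpace Ω] in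
lemma measurableSet_isFirstPassageBelow (s L : ℝ) (x : ℕ) :
    MeasurableSet[sigmaOf X (Set.Iio x)]
      {ω | IsFirstPassageBelow (fun y => s + ∑ k ∈ range y, X k ω) L x} := by
  have hS {y : ℕ} (hy : y ≤ x) :
      Measurable[sigmaOf X (Set.Iio x)] fun ω => s + ∑ k ∈ range y, X k ω :=
    (measurable_sum_sigmaOf fun k hk => by
      simpa using (mem_range.1 hk).trans_le hy).const_add s
  simp only [IsFirstPassageBelow, Set.ofPred_and, Set.ofPred_forall]
  exact (measurableSet_le (hS le_rfl) measurable_const).inter <|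
    .iInter fun y => .iInter fun hy => measurableSet_lt measurable_const (hS hy.le)

lemma integral_exp_neg_mul_sum_sq_le_sum_measureReal [IsProbabilityMeasure μ]
    (hX : ∀ k, Measurable (X k)) {s L t : ℝ} (hL : 0 ≤ L) (ht : 0 ≤ t) (n : ℕ) :
    ∫ ω, exp (-t * ∑ x ∈ range (n + 1), (s + ∑ k ∈ range x, X k ω) ^ 2) ∂μ
      ≤ ∑ x ∈ range (n + 1), exp (-(t * L ^ 2 * x))
          * μ.real {ω | IsFirstPassageBelow (fun y => s + ∑ k ∈ range y, X k ω) L x}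
        + exp (-(t * L ^ 2 * (n + 1))) := by
  set A := fun x => {ω | IsFirstPassageBelow (fun y => s + ∑ k ∈ range y, X k ω) L x}
  have hA x : MeasurableSet (A x) :=
    sigmaOf_le hX _ _ (measurableSet_isFirstPassageBelow s L x)
  have hint x : Integrable ((A x).indicator fun _ => exp (-(t * L ^ 2 * x))) μ :=
    (integrable_const _).indicator (hA x)
  refine (integral_mono_of_nonneg (ae_of_all _ fun _ => (exp_pos _).le)
    ((integrable_finsetSum _ fun x _ => hint x).add (integrable_const _))
    (ae_of_all _ fun ω => exp_neg_mul_sum_range_sq_le hL ht n)).trans_eq ?_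
  rw [integral_add' (integrable_finsetSum _ fun x _ => hint x) (integrable_const _),
    integral_finsetSum _ fun x _ => hint x, integral_const, probReal_univ, one_smul]
  exact congrArg (· + _) <| sum_congr rfl fun x _ => by
    rw [integral_indicator_const _ (hA x), smul_eq_mul, mul_comm]

variable (hX : ∀ k, Measurable (X k)) (hindep : iIndepFun X μ)
  (hident : ∀ k, IdentDistrib (X k) (X 0) μ μ)
include hX hindep hident

theorem integral_exp_neg_mul_sum_sq_walk_le {s L t a δ : ℝ}
    (hint : Integrable (fun ω => exp (a * X 0 ω)) μ) (hL : 0 ≤ L) (ht : 0 ≤ t) (ha : a ≤ 0)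
    (hM : mgf (X 0) μ a ≤ exp (t * L ^ 2 + δ)) (hδ : 0 ≤ δ) (n : ℕ) :
    ∫ ω, exp (-t * ∑ x ∈ range (n + 1), (s + ∑ k ∈ range x, X k ω) ^ 2) ∂μ
      ≤ exp (a * (s - L) + n * δ) + exp (-(t * L ^ 2 * (n + 1))) := by
  have := hindep.isProbabilityMeasure
  have hw x (hx : x ≤ n) : 0 ≤ exp (-(t * L ^ 2 * x)) ∧
      exp (-(t * L ^ 2 * x)) * mgf (X 0) μ a ^ x ≤ exp (n * δ) := by
    refine ⟨(exp_pos _).le, ?_⟩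
    calc exp (-(t * L ^ 2 * x)) * mgf (X 0) μ a ^ x
        ≤ exp (-(t * L ^ 2 * x)) * exp (t * L ^ 2 + δ) ^ x := by gcongr; exact mgf_nonneg
      _ = exp (x * δ) := by rw [← exp_nat_mul, ← exp_add]; ring_nf
      _ ≤ exp (n * δ) := by gcongr
  have hdisj : Set.PairwiseDisjoint ↑(range (n + 1))
      fun x => {ω | IsFirstPassageBelow (fun y => s + ∑ k ∈ range y, X k ω) L x} :=
    fun x _ y _ hxy => Set.disjoint_left.2 fun ω hx hy =>
      hxy (IsFirstPassageBelow.eq (u := fun y => s + ∑ k ∈ range y, X k ω) hx hy)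
  have hstop := sum_mul_measureReal_le hX hindep hident (c := a * (L - s)) hint
    (fun x => measurableSet_isFirstPassageBelow s L x) hdisj
    (fun x ω hω => by nlinarith [hω.1]) hw
  refine (integral_exp_neg_mul_sum_sq_le_sum_measureReal hX hL ht n).trans
    (add_le_add (hstop.trans_eq ?_) le_rfl)
  rw [← exp_add]; ring_nf

theorem integral_exp_neg_mul_sum_sq_walk_le_of_cgf_le {α σ K a₀ c s N : ℝ}
    (hα : α ∈ Set.Ioo 0 1) (hσ : 0 < σ) (hK : 0 ≤ K) (ha₀ : 0 < a₀)
    (hcgf : ∀ a, |a| ≤ a₀ →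
      Integrable (fun ω => exp (a * X 0 ω)) μ ∧
        cgf (X 0) μ a ≤ σ ^ 2 * a ^ 2 / 2 + K * a ^ 4)
    (hca₀ : c ≤ σ ^ 2 * a₀ ^ 2 / 2) (hcK : c * (8 * K * (1 - α) ^ 3) ≤ √2 * α * σ ^ 3)
    (hs : 0 ≤ s) (hN : 0 < N) (hsN : s ^ 2 ≤ c * N) {n : ℕ} (hn : n ≤ √N) :
    ∫ ω, exp (-(1 / N) * ∑ x ∈ range (n + 1), (s + ∑ k ∈ range x, X k ω) ^ 2) ∂μ
      ≤ exp (-(√2 * α * (1 - α) * s ^ 2) / (2 * σ * √N))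
        + exp (-((1 - α) ^ 2 * s ^ 2 * (n + 1)) / N) := by
  have h1α : 0 < 1 - α := sub_pos.2 hα.2
  obtain ⟨hint, hcgf⟩ := hcgf _ (abs_tilt_le hα hσ ha₀ hN (hsN.trans (by gcongr)))
  have hM : mgf (X 0) μ (tilt α σ s N)
      ≤ exp (1 / N * ((1 - α) * s) ^ 2 + K * tilt α σ s N ^ 4) := by
    rw [← exp_log (mgf_pos' hindep.isProbabilityMeasure.ne_zero hint), ← sq_tilt hσ hN]
    exact exp_le_exp.2 hcgf
  calc _ ≤ exp (tilt α σ s N * (s - (1 - α) * s) + n * (K * tilt α σ s N ^ 4))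
        + exp (-(1 / N * ((1 - α) * s) ^ 2 * (n + 1))) :=
      integral_exp_neg_mul_sum_sq_walk_le hX hindep hident hint (by positivity) (by positivity)
        (neg_nonpos.2 (by positivity)) hM (by positivity) n
    _ ≤ _ := by
      gcongr ?_ + ?_
      · exact exp_le_exp.2 (tilt_mul_add_le hα hσ hN hK hcK hsN hn)
      · exact le_of_eq (by ring_nf)

end Walk

theorem random_walk_quadratic_killing_estimate_general
    {Ω : Type*} [MeasurableSpace Ω] (μ : Measure Ω) [IsProbabilityMeasure μ]
    (η : ℕ → Ω → ℤ) (hmeas : ∀ k, Measurable (η k))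
    (νπ : Measure ℤ)
    (hident : ∀ k, μ.map (η k) = νπ)
    (hindep : iIndepFun η μ)
    (a₀ : ℝ) (ha₀ : 0 < a₀)
    (hint : ∀ a : ℝ, |a| ≤ a₀ → Integrable (fun ω => Real.exp (a * (η 0 ω : ℝ))) μ)
    (Λ : ℝ → ℝ)
    (hΛ : ∀ a : ℝ, |a| ≤ a₀ → Λ a = Real.log (∫ ω, Real.exp (a * (η 0 ω : ℝ)) ∂μ))
    (σ : ℝ) (hσ : 0 < σ)
    -- `Λ(a) = σ²a²/2 + O(a⁴)` near 0
    (hΛasym : ∃ K : ℝ, ∀ a : ℝ, |a| ≤ a₀ → |Λ a - σ^2 * a^2 / 2| ≤ K * a^4)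
    (α : ℝ) (hα : α ∈ Set.Ioo (0 : ℝ) 1) :
    ∃ b > 0, ∃ c₀ > 0, ∀ s : ℤ, 0 < s → ∀ N : ℕ, 1 ≤ N →
      ((s : ℝ)^2 ≤ c₀ * N) →
      (∫ ω, Real.exp (-(1 / (N : ℝ)) * ∑ x ∈ Finset.range (Nat.sqrt N + 1),
            ((s : ℝ) + ∑ k ∈ Finset.range x, (η k ω : ℝ))^2) ∂μ
          ≤ Real.exp (-(Real.sqrt 2 * α * (1 - α) * (s : ℝ)^2) / (2 * σ * Real.sqrt N))
            + Real.exp (-((1 - α)^2 * (s : ℝ)^2 * ((Nat.sqrt N : ℝ) + 1)) / N)) ∧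
      (Real.exp (-(Real.sqrt 2 * α * (1 - α) * (s : ℝ)^2) / (2 * σ * Real.sqrt N))
            + Real.exp (-((1 - α)^2 * (s : ℝ)^2 * ((Nat.sqrt N : ℝ) + 1)) / N)
          ≤ 2 * Real.exp (-2 * b * (s : ℝ)^2 / Real.sqrt N)) := by
  obtain ⟨K, hK⟩ := hΛasym
  have hX k : Measurable fun ω => (η k ω : ℝ) := (measurable_of_countable _).comp (hmeas k)
  have hindepX : iIndepFun (fun k ω => (η k ω : ℝ)) μ :=
    hindep.comp _ fun _ => measurable_of_countable _
  have hidentX k : IdentDistrib (fun ω => (η k ω : ℝ)) (fun ω => (η 0 ω : ℝ)) μ μ :=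
    (⟨(hmeas k).aemeasurable, (hmeas 0).aemeasurable, (hident k).trans (hident 0).symm⟩ :
      IdentDistrib (η k) (η 0) μ μ).comp (measurable_of_countable fun z : ℤ => (z : ℝ))
  have hcgf a (ha : |a| ≤ a₀) : Integrable (fun ω => exp (a * (η 0 ω : ℝ))) μ ∧
      cgf (fun ω => (η 0 ω : ℝ)) μ a ≤ σ ^ 2 * a ^ 2 / 2 + max K 1 * a ^ 4 :=
    ⟨hint a ha, by
      rw [show cgf _ μ a = Λ a from (hΛ a ha).symm]
      nlinarith [(abs_le.1 (hK a ha)).2, le_max_left K 1, pow_nonneg (sq_nonneg a) 2]⟩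
  obtain ⟨hα₀, hα₁⟩ := hα
  refine ⟨min (√2 * α * (1 - α) / (4 * σ)) ((1 - α) ^ 2 / 2), by positivity,
    min (σ ^ 2 * a₀ ^ 2 / 2) (√2 * α * σ ^ 3 / (8 * max K 1 * (1 - α) ^ 3)), by positivity,
    fun s hs N hN hsN => ⟨?_, ?_⟩⟩
  · exact integral_exp_neg_mul_sum_sq_walk_le_of_cgf_le hX hindepX hidentX ⟨hα₀, hα₁⟩ hσ
      (by positivity) ha₀ hcgf (min_le_left _ _)
      ((le_div_iff₀ (by positivity)).1 (min_le_right _ _)) (by positivity) (by exact_mod_cast hN)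
      hsN nat_sqrt_le_real_sqrt
  · exact exp_add_exp_le_two_mul_exp hσ (min_le_left _ _) (min_le_right _ _)
      (by exact_mod_cast hN) real_sqrt_le_nat_sqrt_succ

/-- Exponential estimate for
`𝔼_s[exp(-(1/N) Σ_{x=0}^n s_x²)]` with `n = ⌊√N⌋` and walk started at `s > 0`:
it is bounded by
`exp(-√2 α(1-α)s²/(2σ√N)) + exp(-(1-α)²s²(n+1)/N) ≤ 2 exp(-2bs²/√N)`,
with `b > 0` depending only on `α, σ`, valid for `s² ≤ c₀ N`. -/
theorem random_walk_quadratic_killing_estimate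
    {Ω : Type*} [MeasurableSpace Ω] (μ : Measure Ω) [IsProbabilityMeasure μ]
    (η : ℕ → Ω → ℤ) (hmeas : ∀ k, Measurable (η k))
    (νπ : Measure ℤ) [IsProbabilityMeasure νπ]
    (hsym : νπ.map (fun x : ℤ => -x) = νπ)
    (hident : ∀ k, μ.map (η k) = νπ)
    (hindep : iIndepFun η μ)
    (a₀ : ℝ) (ha₀ : 0 < a₀)
    (hint : ∀ a : ℝ, |a| ≤ a₀ → Integrable (fun ω => Real.exp (a * (η 0 ω : ℝ))) μ)
    (Λ : ℝ → ℝ)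
    (hΛ : ∀ a : ℝ, |a| ≤ a₀ → Λ a = Real.log (∫ ω, Real.exp (a * (η 0 ω : ℝ)) ∂μ))
    (σ : ℝ) (hσ : 0 < σ)
    -- `Λ(a) = σ²a²/2 + O(a⁴)` near 0
    (hΛasym : ∃ K : ℝ, ∀ a : ℝ, |a| ≤ a₀ → |Λ a - σ^2 * a^2 / 2| ≤ K * a^4)
    (α : ℝ) (hα : α ∈ Set.Ioo (0 : ℝ) 1) :
    ∃ b > 0, ∃ c₀ > 0, ∀ s : ℤ, 0 < s → ∀ N : ℕ, 1 ≤ N →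
      ((s : ℝ)^2 ≤ c₀ * N) →
      (∫ ω, Real.exp (-(1 / (N : ℝ)) * ∑ x ∈ Finset.range (Nat.sqrt N + 1),
            ((s : ℝ) + ∑ k ∈ Finset.range x, (η k ω : ℝ))^2) ∂μ
          ≤ Real.exp (-(Real.sqrt 2 * α * (1 - α) * (s : ℝ)^2) / (2 * σ * Real.sqrt N))
            + Real.exp (-((1 - α)^2 * (s : ℝ)^2 * ((Nat.sqrt N : ℝ) + 1)) / N)) ∧
      (Real.exp (-(Real.sqrt 2 * α * (1 - α) * (s : ℝ)^2) / (2 * σ * Real.sqrt N))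
            + Real.exp (-((1 - α)^2 * (s : ℝ)^2 * ((Nat.sqrt N : ℝ) + 1)) / N)
          ≤ 2 * Real.exp (-2 * b * (s : ℝ)^2 / Real.sqrt N)) :=
  random_walk_quadratic_killing_estimate_general μ η hmeas νπ hident hindep a₀ ha₀ hint Λ hΛ σ hσ
    hΛasym α hα
end
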